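/- arXiv:2301.01426 — 3 statements merged into one kernel-verified Lean document; each statement's English description precedes it below -/
import Mathlib

section
/- Suppose the bilinear form â on a real Hilbert space V is bounded and coercive (â(u,u) ≥ c₀ ‖u‖² for some c₀ > 0), and f ∈ V*. Then for any finite-dimensional subspace V_h ⊂ V there exists a unique u_h ∈ V_h with â(u_h, v) = f(v) for all v ∈ V_h, and if u ∈ V solves â(u, v) = f(v) for all v ∈ V, then ‖u − u_h‖ ≤ (C/c₀) inf_{w ∈ V_h} ‖u − w‖, where C is the boundedness constant of â (Céa's lemma for nonsymmetric forms). -/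
/-!
Coercivity makes `B` anisotropic, so its restriction to the finite-dimensional space `V_h` is a
nondegenerate bilinear form and hence induces an isomorphism of `V_h` with its dual: this gives
the unique Galerkin solution `u_h`. Subtracting the two variational equations yields Galerkin
orthogonality `B (u - u_h) v = 0` for `v ∈ V_h`, so for every `w ∈ V_h`
`c₀ ‖u - u_h‖² ≤ B (u - u_h) (u - u_h) = B (u - u_h) (u - w) ≤ C ‖u - u_h‖ ‖u - w‖`.
-/

namespace LinearMap.BilinForm

theorem nondegenerate_of_apply_self_eq_zero {R M : Type*} [CommSemiring R] [AddCommMonoid M]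
    [Module R M] {B : LinearMap.BilinForm R M} (hB : ∀ x, B x x = 0 → x = 0) : B.Nondegenerate :=
  ⟨fun x hx => hB x (hx x), fun y hy => hB y (hy y)⟩

variable {K V : Type*} [Field K] [AddCommGroup V] [Module K V]

theorem existsUnique_apply_eq [FiniteDimensional K V] {B : LinearMap.BilinForm K V}
    (hB : B.Nondegenerate) (g : Module.Dual K V) : ∃! u, ∀ v, B u v = g v :=
  ⟨(B.toDual hB).symm g, apply_toDual_symm_apply g,
    fun _ hu => (B.toDual hB).eq_symm_apply.mpr (LinearMap.ext hu)⟩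

theorem exists_unique_galerkin_solution (B : LinearMap.BilinForm K V) (W : Submodule K V)
    [FiniteDimensional K W] (hB : ∀ x ∈ W, B x x = 0 → x = 0) (g : Module.Dual K V) :
    ∃ u ∈ W, (∀ v ∈ W, B u v = g v) ∧ ∀ u' ∈ W, (∀ v ∈ W, B u' v = g v) → u' = u := by
  have hW : (B.restrict W).Nondegenerate :=
    nondegenerate_of_apply_self_eq_zero fun x hx => Subtype.ext (hB x x.2 hx)
  obtain ⟨u, hu, huniq⟩ := existsUnique_apply_eq hW (g.domRestrict W)
  refine ⟨u, u.2, fun v hv => hu ⟨v, hv⟩, fun u' hu' hsol => ?_⟩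
  exact congrArg Subtype.val (huniq ⟨u', hu'⟩ fun v => hsol v v.2)

end LinearMap.BilinForm

theorem Real.le_mul_iInf {ι : Type*} [Nonempty ι] {f : ι → ℝ} {a r : ℝ} (hf : ∀ i, 0 ≤ f i)
    (h : ∀ i, a ≤ r * f i) : a ≤ r * ⨅ i, f i := by
  rcases le_or_gt 0 r with hr | hr
  · rw [Real.mul_iInf_of_nonneg hr]
    exact le_ciInf h
  · rw [Real.mul_iInf_of_nonpos hr.le]
    have hbdd : BddAbove (Set.range fun i => r * f i) :=
      ⟨0, by rintro _ ⟨i, rfl⟩; exact mul_nonpos_of_nonpos_of_nonneg hr.le (hf i)⟩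
    exact le_ciSup_of_le hbdd (Classical.arbitrary ι) (h _)

section Coercive

variable {V : Type*} [NormedAddCommGroup V] [NormedSpace ℝ V] {B : V →ₗ[ℝ] V →ₗ[ℝ] ℝ} {C c₀ : ℝ}

theorem eq_zero_of_coercive (hc₀ : 0 < c₀) (hcoer : ∀ u : V, B u u ≥ c₀ * ‖u‖ ^ 2) {x : V}
    (hx : B x x = 0) : x = 0 := by
  have hsq : ‖x‖ ^ 2 ≤ 0 := by nlinarith [hcoer x]
  exact norm_eq_zero.mp (pow_eq_zero_iff two_ne_zero |>.mp (le_antisymm hsq (by positivity)))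

theorem bound_mul_norm_nonneg (hc₀ : 0 < c₀) (hbdd : ∀ u v : V, |B u v| ≤ C * ‖u‖ * ‖v‖)
    (hcoer : ∀ u : V, B u u ≥ c₀ * ‖u‖ ^ 2) (y : V) : 0 ≤ C * ‖y‖ := by
  rcases (norm_nonneg y).eq_or_lt with hy | hy
  · rw [← hy, mul_zero]
  · have hc₀C : c₀ * ‖y‖ ^ 2 ≤ C * ‖y‖ * ‖y‖ := (hcoer y).trans ((le_abs_self _).trans (hbdd y y))
    nlinarith

theorem norm_sub_le_of_galerkin_orthogonal (hc₀ : 0 < c₀)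
    (hbdd : ∀ u v : V, |B u v| ≤ C * ‖u‖ * ‖v‖) (hcoer : ∀ u : V, B u u ≥ c₀ * ‖u‖ ^ 2)
    {W : Submodule ℝ V} {u uh w : V} (huh : uh ∈ W) (horth : ∀ v ∈ W, B (u - uh) v = 0)
    (hw : w ∈ W) : ‖u - uh‖ ≤ C / c₀ * ‖u - w‖ := by
  set z := u - uh
  have hzw : B z z = B z (u - w) := by
    have hsplit : z = (u - w) + (w - uh) := by simp only [z, sub_add_sub_cancel]
    conv_lhs => arg 2; rw [hsplit]
    rw [map_add, horth _ (W.sub_mem hw huh), add_zero]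
  have key : c₀ * ‖z‖ * ‖z‖ ≤ C * ‖u - w‖ * ‖z‖ := calc
    c₀ * ‖z‖ * ‖z‖ = c₀ * ‖z‖ ^ 2 := by ring
    _ ≤ B z (u - w) := hzw ▸ hcoer z
    _ ≤ C * ‖z‖ * ‖u - w‖ := (le_abs_self _).trans (hbdd _ _)
    _ = C * ‖u - w‖ * ‖z‖ := by ring
  rw [div_mul_eq_mul_div, le_div_iff₀' hc₀]
  rcases (norm_nonneg z).eq_or_lt with hz | hz
  · rw [← hz, mul_zero]
    exact bound_mul_norm_nonneg hc₀ hbdd hcoer _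
  · exact le_of_mul_le_mul_right key hz

end Coercive

theorem stmt_3_general {V : Type*} [NormedAddCommGroup V] [InnerProductSpace ℝ V]
    (B : V →ₗ[ℝ] V →ₗ[ℝ] ℝ) (C c₀ : ℝ) (hc₀ : 0 < c₀)
    (hbdd : ∀ u v : V, |B u v| ≤ C * ‖u‖ * ‖v‖)
    (hcoer : ∀ u : V, B u u ≥ c₀ * ‖u‖ ^ 2)
    (f : V →L[ℝ] ℝ)
    (Vh : Subspace ℝ V) [FiniteDimensional ℝ Vh] :
    ∃ uh ∈ Vh, (∀ v ∈ Vh, B uh v = f v) ∧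
      (∀ uh' ∈ Vh, (∀ v ∈ Vh, B uh' v = f v) → uh' = uh) ∧
      ∀ u : V, (∀ v : V, B u v = f v) →
        ‖u - uh‖ ≤ (C / c₀) * ⨅ w : Vh, ‖u - (w : V)‖ := by
  obtain ⟨uh, huh, hsol, huniq⟩ :=
    LinearMap.BilinForm.exists_unique_galerkin_solution B Vh
    (fun _ _ => eq_zero_of_coercive hc₀ hcoer) (f : V →ₗ[ℝ] ℝ)
  refine ⟨uh, huh, hsol, huniq, fun u hu => ?_⟩
  have horth : ∀ v ∈ Vh, B (u - uh) v = 0 := fun v hv => by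
    rw [map_sub, LinearMap.sub_apply, hu, hsol v hv]
    exact sub_self _
  exact Real.le_mul_iInf (fun _ => norm_nonneg _) fun w =>
    norm_sub_le_of_galerkin_orthogonal hc₀ hbdd hcoer huh horth w.2

/-- Céa's lemma for bounded coercive (possibly nonsymmetric) bilinear forms:
unique solvability of the Galerkin problem on a finite-dimensional subspace and
quasi-optimality of the Galerkin solution. -/
theorem stmt_3 {V : Type*} [NormedAddCommGroup V] [InnerProductSpace ℝ V]
    [CompleteSpace V]
    (B : V →ₗ[ℝ] V →ₗ[ℝ] ℝ) (C c₀ : ℝ) (hc₀ : 0 < c₀)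
    (hbdd : ∀ u v : V, |B u v| ≤ C * ‖u‖ * ‖v‖)
    (hcoer : ∀ u : V, B u u ≥ c₀ * ‖u‖ ^ 2)
    (f : V →L[ℝ] ℝ)
    (Vh : Subspace ℝ V) [FiniteDimensional ℝ Vh] :
    ∃ uh ∈ Vh, (∀ v ∈ Vh, B uh v = f v) ∧
      (∀ uh' ∈ Vh, (∀ v ∈ Vh, B uh' v = f v) → uh' = uh) ∧
      ∀ u : V, (∀ v : V, B u v = f v) →
        ‖u - uh‖ ≤ (C / c₀) * ⨅ w : Vh, ‖u - (w : V)‖ :=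
  stmt_3_general B C c₀ hc₀ hbdd hcoer f Vh
end

section
/- Let V be a real Hilbert space, a : V × V → ℝ a bounded, coercive, symmetric bilinear form, and N : V × V → ℝ bounded bilinear with |N(u,v)| ≤ C_N ‖u‖ ‖v‖. Suppose u ∈ V satisfies a(u,v) + N(u,v) = f(v) for all v ∈ V, and ũ ∈ V satisfies a(ũ,v) = f(v) − N(w,v) for all v ∈ V, for some w ∈ V. Then ‖u − ũ‖ ≤ (C_N / c_a) ‖u − w‖, where c_a is the coercivity constant of a. (This is the error-contraction mechanism underlying step 2 of the iterative two-grid/two-level algorithms.) -/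
/-! Subtracting the two variational equations gives `a(u - ut, ·) = N(w - u, ·)`, so `u - ut`
represents a functional of norm at most `C_N ‖u - w‖`; coercivity of `a` bounds the norm of
the representing element by `1 / c_a` times the norm of the functional. -/

theorem bilinear_sub_apply_eq_of_perturbed_eqs {R M : Type*} [CommRing R] [AddCommGroup M]
    [Module R M] (a N : M →ₗ[R] M →ₗ[R] R) (f : M → R)
    {u ut w : M} (hu : ∀ v, a u v + N u v = f v) (hut : ∀ v, a ut v = f v - N w v) (v : M) :
    a (u - ut) v = N (w - u) v := by
  simp only [map_sub, LinearMap.sub_apply]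
  linear_combination hu v - hut v

section Coercive

variable {E : Type*} [SeminormedAddCommGroup E]

theorem mul_norm_nonneg_of_abs_le_mul_norm_mul_norm {N : E → E → ℝ} {C : ℝ}
    (hN : ∀ u v, |N u v| ≤ C * ‖u‖ * ‖v‖) (y : E) : 0 ≤ C * ‖y‖ := by
  rcases (norm_nonneg y).eq_or_lt with hy | hy
  · simp [← hy]
  · have hyy : 0 ≤ C * ‖y‖ * ‖y‖ := (abs_nonneg _).trans (hN y y)
    exact nonneg_of_mul_nonneg_left hyy hy

theorem norm_le_div_of_coercive [Module ℝ E] (a : E →ₗ[ℝ] E →ₗ[ℝ] ℝ) {c M : ℝ} (hc : 0 < c)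
    (hM : 0 ≤ M) (hcoer : ∀ v, a v v ≥ c * ‖v‖ ^ 2) {x : E} (hx : ∀ v, |a x v| ≤ M * ‖v‖) :
    ‖x‖ ≤ M / c := by
  rw [le_div_iff₀ hc]
  rcases (norm_nonneg x).eq_or_lt with h0 | hpos
  · rw [← h0, zero_mul]
    exact hM
  · have hsq : c * ‖x‖ * ‖x‖ ≤ M * ‖x‖ :=
      calc c * ‖x‖ * ‖x‖ = c * ‖x‖ ^ 2 := by ring
        _ ≤ a x x := hcoer x
        _ ≤ |a x x| := le_abs_self _
        _ ≤ M * ‖x‖ := hx x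
    rw [mul_comm ‖x‖ c]
    exact le_of_mul_le_mul_right hsq hpos

end Coercive

theorem stmt_9_general {V : Type*} [NormedAddCommGroup V] [InnerProductSpace ℝ V]
    (a N : V →ₗ[ℝ] V →ₗ[ℝ] ℝ) (ca CN : ℝ) (hca : 0 < ca)
    (hcoer : ∀ v : V, a v v ≥ ca * ‖v‖ ^ 2)
    (hN : ∀ u v : V, |N u v| ≤ CN * ‖u‖ * ‖v‖)
    (f : V →L[ℝ] ℝ) (u ut w : V)
    (hu : ∀ v : V, a u v + N u v = f v)
    (hut : ∀ v : V, a ut v = f v - N w v) :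
    ‖u - ut‖ ≤ (CN / ca) * ‖u - w‖ := by
  have hdual : ∀ v, |a (u - ut) v| ≤ CN * ‖u - w‖ * ‖v‖ := fun v => by
    rw [bilinear_sub_apply_eq_of_perturbed_eqs a N f hu hut v, norm_sub_rev u w]
    exact hN (w - u) v
  rw [div_mul_eq_mul_div]
  exact norm_le_div_of_coercive a hca (mul_norm_nonneg_of_abs_le_mul_norm_mul_norm hN _)
    hcoer hdual

/-- The error-contraction mechanism of step 2 of the two-grid/two-level algorithm:
if `a(u,·) + N(u,·) = f` and `a(ut,·) = f − N(w,·)` then `‖u − ut‖ ≤ (C_N/c_a)‖u − w‖`. -/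
theorem stmt_9 {V : Type*} [NormedAddCommGroup V] [InnerProductSpace ℝ V]
    [CompleteSpace V]
    (a N : V →ₗ[ℝ] V →ₗ[ℝ] ℝ) (Ca ca CN : ℝ) (hca : 0 < ca)
    (hsymm : ∀ u v : V, a u v = a v u)
    (habdd : ∀ u v : V, |a u v| ≤ Ca * ‖u‖ * ‖v‖)
    (hcoer : ∀ v : V, a v v ≥ ca * ‖v‖ ^ 2)
    (hN : ∀ u v : V, |N u v| ≤ CN * ‖u‖ * ‖v‖)
    (f : V →L[ℝ] ℝ) (u ut w : V)
    (hu : ∀ v : V, a u v + N u v = f v)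
    (hut : ∀ v : V, a ut v = f v - N w v) :
    ‖u - ut‖ ≤ (CN / ca) * ‖u - w‖ :=
  stmt_9_general a N ca CN hca hcoer hN f u ut w hu hut
end

section
/- In the setting of the previous contraction lemma, if additionally C_N < c_a и the iteration u^{k+1} is defined by a(u^{k+1}, v) = f(v) − N(u^k + e^k, v) where e^k is any correction satisfying ‖(u − u^k) − e^k‖ ≤ ρ ‖u − u^k‖ for a fixed ρ ∈ (0,1), then ‖u − u^{k+1}‖ ≤ (C_N ρ / c_a) ‖u − u^k‖, so the iteration converges linearly with rate C_N ρ / c_a whenever C_N ρ < c_a. -/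
/-!
Subtracting the iteration from the exact equation, the new error `w = u - u^{k+1}` satisfies
`a(w, v) = N(u^k + e^k - u, v)`. Testing with `v = w` and using coercivity,
`c_a ‖w‖² ≤ C_N ‖u - u^k - e^k‖ ‖w‖ ≤ C_N ρ ‖u - u^k‖ ‖w‖`.
-/

theorem nonneg_of_abs_apply_le_mul_norm_mul_norm {V : Type*} [NormedAddCommGroup V]
    [Module ℝ V] [Nontrivial V] {N : V →ₗ[ℝ] V →ₗ[ℝ] ℝ} {C : ℝ}
    (hN : ∀ u v : V, |N u v| ≤ C * ‖u‖ * ‖v‖) : 0 ≤ C := by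
  obtain ⟨v, hv⟩ := exists_ne (0 : V)
  have hv' : 0 < ‖v‖ * ‖v‖ := by positivity
  have : 0 ≤ C * (‖v‖ * ‖v‖) := by linarith [hN v v, abs_nonneg (N v v), mul_assoc C ‖v‖ ‖v‖]
  exact nonneg_of_mul_nonneg_left this hv'

section

variable {V : Type*} [SeminormedAddCommGroup V] [Module ℝ V]

theorem norm_le_div_of_coercive_s10 {a : V →ₗ[ℝ] V →ₗ[ℝ] ℝ} {ca M : ℝ} (hca : 0 < ca)
    (hcoer : ∀ v : V, a v v ≥ ca * ‖v‖ ^ 2) (hM : 0 ≤ M) {w : V}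
    (hw : ∀ v : V, a w v ≤ M * ‖v‖) : ‖w‖ ≤ M / ca := by
  rw [le_div_iff₀ hca]
  rcases (norm_nonneg w).eq_or_lt with hw0 | hw0
  · rw [← hw0]; simpa using hM
  · have : ca * ‖w‖ ^ 2 ≤ M * ‖w‖ := (hcoer w).trans (hw w)
    nlinarith

theorem apply_sub_eq_of_step {a N : V →ₗ[ℝ] V →ₗ[ℝ] ℝ} {f : V →L[ℝ] ℝ} {u u' z : V}
    (hu : ∀ v : V, a u v + N u v = f v) (hu' : ∀ v : V, a u' v = f v - N z v) (v : V) :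
    a (u - u') v = N (z - u) v := by
  simp only [map_sub, LinearMap.sub_apply]
  linarith [hu v, hu' v]

end

theorem stmt_10_general {V : Type*} [NormedAddCommGroup V] [InnerProductSpace ℝ V]
    (a N : V →ₗ[ℝ] V →ₗ[ℝ] ℝ) (ca CN ρ : ℝ) (hca : 0 < ca)
    (hcoer : ∀ v : V, a v v ≥ ca * ‖v‖ ^ 2)
    (hNbdd : ∀ u v : V, |N u v| ≤ CN * ‖u‖ * ‖v‖)
    (f : V →L[ℝ] ℝ) (u : V) (useq e : ℕ → V)
    (hu : ∀ v : V, a u v + N u v = f v)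
    (hiter : ∀ k, ∀ v : V, a (useq (k + 1)) v = f v - N (useq k + e k) v)
    (hcorr : ∀ k, ‖(u - useq k) - e k‖ ≤ ρ * ‖u - useq k‖) :
    ∀ k, ‖u - useq (k + 1)‖ ≤ (CN * ρ / ca) * ‖u - useq k‖ := by
  intro k
  rcases subsingleton_or_nontrivial V with hV | hV
  · simp [Subsingleton.elim (u - useq (k + 1)) 0, Subsingleton.elim (u - useq k) 0]
  have hCN := nonneg_of_abs_apply_le_mul_norm_mul_norm hNbdd
  set y := useq k + e k - u
  have hy : ‖y‖ ≤ ρ * ‖u - useq k‖ := by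
    rw [show y = -((u - useq k) - e k) by simp only [y]; abel, norm_neg]
    exact hcorr k
  calc ‖u - useq (k + 1)‖ ≤ CN * ‖y‖ / ca :=
        norm_le_div_of_coercive_s10 hca hcoer (by positivity) fun v =>
          apply_sub_eq_of_step hu (hiter k) v ▸ (le_abs_self _).trans (hNbdd y v)
    _ ≤ CN * (ρ * ‖u - useq k‖) / ca := by gcongr
    _ = CN * ρ / ca * ‖u - useq k‖ := by ring

/-- Linear convergence of the two-grid/two-level iteration: if the coarse correction
`e^k` reduces the error by a factor `ρ < 1`, then
`‖u − u^{k+1}‖ ≤ (C_N ρ / c_a) ‖u − u^k‖`. -/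
theorem stmt_10 {V : Type*} [NormedAddCommGroup V] [InnerProductSpace ℝ V]
    [CompleteSpace V]
    (a N : V →ₗ[ℝ] V →ₗ[ℝ] ℝ) (Ca ca CN ρ : ℝ) (hca : 0 < ca)
    (hsymm : ∀ u v : V, a u v = a v u)
    (habdd : ∀ u v : V, |a u v| ≤ Ca * ‖u‖ * ‖v‖)
    (hcoer : ∀ v : V, a v v ≥ ca * ‖v‖ ^ 2)
    (hNbdd : ∀ u v : V, |N u v| ≤ CN * ‖u‖ * ‖v‖)
    (hCN : CN < ca) (hρ : ρ ∈ Set.Ioo (0 : ℝ) 1)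
    (f : V →L[ℝ] ℝ) (u : V) (useq e : ℕ → V)
    (hu : ∀ v : V, a u v + N u v = f v)
    (hiter : ∀ k, ∀ v : V, a (useq (k + 1)) v = f v - N (useq k + e k) v)
    (hcorr : ∀ k, ‖(u - useq k) - e k‖ ≤ ρ * ‖u - useq k‖) :
    ∀ k, ‖u - useq (k + 1)‖ ≤ (CN * ρ / ca) * ‖u - useq k‖ :=
  stmt_10_general a N ca CN ρ hca hcoer hNbdd f u useq e hu hiter hcorr
end
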